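/- Let d_λ denote the Weyl dimension of the SU(n)-representation with dominant weight λ (λ₁ ≥ ... ≥ λ_{n-1} ≥ λₙ = 0), so d_λ = ∏_{1≤i<j≤n} (λ_i - λ_j + j - i)/(j-i). For every p = (p₁,...,p_{n-1}) ∈ ℤ^{n-1} with p₁ ≥ ... ≥ p_{n-1}, there exist constants c_n, d_n > 0 depending only on n such that c_n(∑|p_i| + 1)^{n-1} ≤ inf{ d_λ : λ dominant, ∃ t₁,...,tₙ ≥ 0 integers with ∑t_i = ∑λ_i and t_i - tₙ = p_i for 1 ≤ i ≤ n-1, realizable as the content of a semistandard tableau of shape λ } ≤ d_n(∑|p_i|+1)^{n-1}, with c_n = 1/(n^{2(n-1)} 2^{n-2} ∏_{1≤i<j≤n}(j-i)) and d_n = (n+1)^{n-1}/(n-1)!. -/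

import Mathlib

/-!
Lower bound: write `M = λ₁ + n - 1` for the numerator of the Weyl factor of the pair `(1, n)`.
For `1 < j < n` the numerators of `(1, j)` and `(j, n)` are at least `1` and add up to `M`, so
their product is at least `M / 2`; hence `M ^ (n - 1) ≤ 2 ^ (n - 2) ∏ (λᵢ - λⱼ + j - i)`. On the
other hand every content entry is at most `|λ| ≤ n λ₁`, so `∑ |pᵢ| + 1 ≤ n² M`.

Upper bound: with `N = ∑ |pᵢ|`, the content `(p₁ + N, …, p_{n-1} + N, N)` fills the one-row
shape `(m)`, `m ≤ (n + 1) N`, whose dimension is `C(m + n - 1, n - 1) ≤ (m + n - 1)^(n-1)/(n-1)!`.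
-/

open Finset

/-- The Weyl dimension of the irreducible `SU(n)`-representation with dominant
weight `λ` (given by row lengths `lam : Fin n → ℕ`):
`d_λ = ∏_{1 ≤ i < j ≤ n} (λ_i - λ_j + j - i)/(j - i)`. -/
noncomputable def suDim (n : ℕ) (lam : Fin n → ℕ) : ℝ :=
  ∏ q ∈ univ.filter (fun q : Fin n × Fin n => q.1 < q.2),
    (((lam q.1 : ℤ) - (lam q.2 : ℤ) + ((q.2 : ℕ) : ℤ) - ((q.1 : ℕ) : ℤ) : ℤ) : ℝ) /
      (((q.2 : ℕ) - (q.1 : ℕ) : ℕ) : ℝ)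

/-- The content of a semistandard Young tableau: `content μ T k` is the number
of cells of `μ` whose entry equals `k`. -/
def ssytContent (μ : YoungDiagram) (T : SemistandardYoungTableau μ) (k : ℕ) : ℕ :=
  (μ.cells.filter (fun c => T c.1 c.2 = k)).card

section PairProducts

variable {ι M : Type*} [Fintype ι] [LinearOrder ι] [LocallyFiniteOrderTop ι]

theorem prod_filter_lt_eq_prod_prod_Ioi [CommMonoid M] (f : ι × ι → M) :
    ∏ q ∈ univ.filter (fun q : ι × ι => q.1 < q.2), f q = ∏ i, ∏ j ∈ Ioi i, f (i, j) :=
  prod_finset_product _ _ _ fun q => by simp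

variable [LocallyFiniteOrder ι] [CommMonoid M] [PartialOrder M] [MulLeftMono M]

theorem mul_prod_Ioo_le_prod_filter_lt (f : ι × ι → M) (hf : ∀ i j, i < j → 1 ≤ f (i, j))
    {a b : ι} (hab : a < b) :
    f (a, b) * ∏ j ∈ Ioo a b, (f (a, j) * f (j, b)) ≤
      ∏ q ∈ univ.filter (fun q : ι × ι => q.1 < q.2), f q := by
  have hrow : ∀ i, 1 ≤ ∏ j ∈ Ioi i, f (i, j) := fun i =>
    one_le_prod' fun j hj => hf i j (mem_Ioi.1 hj)
  rw [prod_filter_lt_eq_prod_prod_Ioi]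
  calc f (a, b) * ∏ j ∈ Ioo a b, (f (a, j) * f (j, b))
      = (∏ j ∈ Ioc a b, f (a, j)) * ∏ i ∈ Ioo a b, f (i, b) := by
        rw [prod_mul_distrib, ← Ioo_insert_right hab, prod_insert (by simp), mul_assoc]
    _ ≤ (∏ j ∈ Ioi a, f (a, j)) * ∏ i ∈ Ioo a b, ∏ j ∈ Ioi i, f (i, j) :=
        mul_le_mul' (prod_le_prod_of_subset_of_one_le' Ioc_subset_Ioi_self
            fun j hj _ => hf a j (mem_Ioi.1 hj))
          (prod_le_prod' fun i hi => single_le_prod' (fun j hj => hf i j (mem_Ioi.1 hj))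
            (mem_Ioi.2 (mem_Ioo.1 hi).2))
    _ = ∏ i ∈ insert a (Ioo a b), ∏ j ∈ Ioi i, f (i, j) := by
        rw [prod_insert left_notMem_Ioo]
    _ ≤ ∏ i, ∏ j ∈ Ioi i, f (i, j) :=
        prod_le_prod_of_subset_of_one_le' (subset_univ _) fun i _ _ => hrow i

end PairProducts

section WeylNumerator

variable {n : ℕ} {lam : Fin n → ℕ}

/-- `λᵢ - λⱼ + j - i` for `q = (i, j)`, in `ℕ`: the truncated subtractions are exact for antitone
`lam` and `i ≤ j`. -/
def weylNumerator (lam : Fin n → ℕ) (q : Fin n × Fin n) : ℕ :=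
  lam q.1 - lam q.2 + ((q.2 : ℕ) - q.1)

theorem one_le_weylNumerator {i j : Fin n} (hij : i < j) :
    1 ≤ weylNumerator lam (i, j) := by
  have : (i : ℕ) < j := hij
  simp only [weylNumerator]
  omega

theorem weylNumerator_add_weylNumerator (hlam : Antitone lam) {a j b : Fin n} (haj : a ≤ j)
    (hjb : j ≤ b) :
    weylNumerator lam (a, j) + weylNumerator lam (j, b) = weylNumerator lam (a, b) := by
  have := hlam haj
  have := hlam hjb
  have : (a : ℕ) ≤ j := haj
  have : (j : ℕ) ≤ b := hjb
  simp only [weylNumerator]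
  omega

theorem weylNumerator_pow_le (hlam : Antitone lam) {a b : Fin n} (hab : a < b) :
    weylNumerator lam (a, b) ^ ((b : ℕ) - a) ≤
      2 ^ ((b : ℕ) - a - 1) *
        ∏ q ∈ univ.filter (fun q : Fin n × Fin n => q.1 < q.2), weylNumerator lam q := by
  set M := weylNumerator lam (a, b)
  have hpair : ∀ j ∈ Ioo a b, M ≤ 2 * (weylNumerator lam (a, j) * weylNumerator lam (j, b)) := by
    intro j hj
    obtain ⟨haj, hjb⟩ := mem_Ioo.1 hj
    have := weylNumerator_add_weylNumerator hlam haj.le hjb.le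
    have := one_le_weylNumerator (lam := lam) haj
    have := one_le_weylNumerator (lam := lam) hjb
    nlinarith
  have hab' : (a : ℕ) < b := hab
  calc M ^ ((b : ℕ) - a) = M ^ #(Ioo a b) * M := by
        rw [Fin.card_Ioo, ← pow_succ]
        congr 1
        omega
    _ ≤ (∏ j ∈ Ioo a b, 2 * (weylNumerator lam (a, j) * weylNumerator lam (j, b))) * M :=
        Nat.mul_le_mul_right _ (pow_card_le_prod _ _ _ hpair)
    _ = 2 ^ ((b : ℕ) - a - 1) *
          (M * ∏ j ∈ Ioo a b, (weylNumerator lam (a, j) * weylNumerator lam (j, b))) := by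
        rw [prod_mul_distrib, prod_const, Fin.card_Ioo]
        ring
    _ ≤ _ := Nat.mul_le_mul_left _ (mul_prod_Ioo_le_prod_filter_lt _
          (fun _ _ => one_le_weylNumerator) hab)

theorem suDim_eq_div (hlam : Antitone lam) :
    suDim n lam =
      (∏ q ∈ univ.filter (fun q : Fin n × Fin n => q.1 < q.2), (weylNumerator lam q : ℝ)) /
        ∏ q ∈ univ.filter (fun q : Fin n × Fin n => q.1 < q.2),
          (((q.2 : ℕ) - (q.1 : ℕ) : ℕ) : ℝ) := by
  rw [suDim, ← prod_div_distrib]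
  refine prod_congr rfl fun q hq => ?_
  have hq : q.1 < q.2 := (mem_filter.1 hq).2
  have := hlam hq.le
  have : (q.1 : ℕ) < q.2 := hq
  congr 1
  rw [show (lam q.1 : ℤ) - lam q.2 + ((q.2 : ℕ) : ℤ) - ((q.1 : ℕ) : ℤ) = weylNumerator lam q by
    simp only [weylNumerator]; omega, Int.cast_natCast]

theorem mul_pow_le_suDim (hn : 2 ≤ n) (hlam : Antitone lam)
    (hlast : lam ⟨n - 1, Nat.sub_one_lt_of_lt hn⟩ = 0) {S : ℝ} (hS0 : 0 ≤ S)
    (hS : S ≤ ((n - 1 : ℕ) : ℝ) * ∑ i, (lam i : ℝ)) :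
    1 / ((n : ℝ) ^ (2 * (n - 1)) * 2 ^ (n - 2) *
        ∏ q ∈ univ.filter (fun q : Fin n × Fin n => q.1 < q.2),
          (((q.2 : ℕ) - (q.1 : ℕ) : ℕ) : ℝ)) * (S + 1) ^ (n - 1) ≤ suDim n lam := by
  set B := ∏ q ∈ univ.filter (fun q : Fin n × Fin n => q.1 < q.2),
    (((q.2 : ℕ) - (q.1 : ℕ) : ℕ) : ℝ)
  set lam₀ := lam ⟨0, Nat.zero_lt_of_lt hn⟩
  set M : ℝ := ((lam₀ + (n - 1) : ℕ) : ℝ)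
  have hB : 0 < B := prod_pos fun q hq => by
    have : (q.1 : ℕ) < q.2 := (mem_filter.1 hq).2
    exact_mod_cast Nat.sub_pos_of_lt this
  have hsum : ∑ i, (lam i : ℝ) ≤ n * lam₀ := by
    simpa using sum_le_card_nsmul univ (fun i => (lam i : ℝ)) _
      fun i _ => Nat.cast_le.2 (hlam (Nat.zero_le (i : ℕ)))
  have hSM : S + 1 ≤ (n : ℝ) ^ 2 * M := by
    have hn' : (2 : ℝ) ≤ n := by exact_mod_cast hn
    simp only [M, Nat.cast_add, Nat.cast_sub (by omega : 1 ≤ n), Nat.cast_one] at hS ⊢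
    nlinarith [lam₀.cast_nonneg (α := ℝ)]
  have hM : M ^ (n - 1) ≤ 2 ^ (n - 2) *
      ∏ q ∈ univ.filter (fun q : Fin n × Fin n => q.1 < q.2), (weylNumerator lam q : ℝ) := by
    have key : weylNumerator lam (⟨0, Nat.zero_lt_of_lt hn⟩, ⟨n - 1, Nat.sub_one_lt_of_lt hn⟩) ^
        (n - 1) ≤ 2 ^ (n - 2) *
          ∏ q ∈ univ.filter (fun q : Fin n × Fin n => q.1 < q.2), weylNumerator lam q :=
      weylNumerator_pow_le hlam (Fin.mk_lt_mk.2 (by omega : 0 < n - 1))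
    rw [weylNumerator] at key
    simp only [hlast, Nat.sub_zero] at key
    simp only [M, lam₀]
    exact_mod_cast key
  rw [suDim_eq_div hlam, div_mul_eq_mul_div, one_mul, div_le_div_iff₀ (by positivity) hB]
  calc (S + 1) ^ (n - 1) * B ≤ ((n : ℝ) ^ 2 * M) ^ (n - 1) * B := by gcongr
    _ = (n : ℝ) ^ (2 * (n - 1)) * M ^ (n - 1) * B := by rw [mul_pow, ← pow_mul]
    _ ≤ (n : ℝ) ^ (2 * (n - 1)) * (2 ^ (n - 2) *
          ∏ q ∈ univ.filter (fun q : Fin n × Fin n => q.1 < q.2), (weylNumerator lam q : ℝ)) *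
          B := by gcongr
    _ = _ := by ring

end WeylNumerator

theorem sum_abs_le_of_sub_eq {n : ℕ} (c : ℕ → ℕ) (p : Fin (n - 1) → ℤ)
    (hp : ∀ i : Fin (n - 1), (c i : ℤ) - c (n - 1) = p i) :
    ∑ i, |(p i : ℝ)| ≤ ((n - 1 : ℕ) : ℝ) * ∑ k ∈ range n, (c k : ℝ) := by
  have hc : ∀ k < n, (c k : ℝ) ≤ ∑ k ∈ range n, (c k : ℝ) := fun k hk =>
    single_le_sum (fun _ _ => Nat.cast_nonneg _) (mem_range.2 hk)
  calc ∑ i, |(p i : ℝ)| ≤ ∑ _i : Fin (n - 1), ∑ k ∈ range n, (c k : ℝ) := by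
        refine sum_le_sum fun i _ => ?_
        rw [← hp i, abs_le]
        push_cast
        have := hc i (by have := i.2; omega)
        have := hc (n - 1) (by have := i.2; omega)
        constructor <;> linarith [(c i).cast_nonneg (α := ℝ), (c (n - 1)).cast_nonneg (α := ℝ)]
    _ = _ := by simp

section RowTableau

variable (L : List ℕ) (hL : L.SortedLE) (μ : YoungDiagram)
  (hμ : ∀ i j, (i, j) ∈ μ ↔ i = 0 ∧ j < L.length)

def rowTableau : SemistandardYoungTableau μ where
  entry i j := if i = 0 then L.getD j 0 else 0
  row_weak' {i j₁ j₂} hj h := by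
    obtain ⟨rfl, hj₂⟩ := (hμ _ _).1 h
    simp only [List.getD_eq_getElem _ _ hj₂, List.getD_eq_getElem _ _ (hj.trans hj₂)]
    exact hL.getElem_le_getElem_of_le hj.le
  col_strict' {i₁ i₂ j} hi h := by
    have := ((hμ _ _).1 h).1
    omega
  zeros' {i j} h := by
    rw [hμ, not_and_or, not_lt] at h
    split_ifs with hi
    · exact List.getD_eq_default _ _ (h.resolve_left (not_not.2 hi))
    · rfl

theorem rowTableau_zero_apply {j : ℕ} (hj : j < L.length) : rowTableau L hL μ hμ 0 j = L[j] :=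
  List.getD_eq_getElem L 0 hj

theorem rowTableau_mem {c : ℕ × ℕ} (hc : c ∈ μ.cells) : rowTableau L hL μ hμ c.1 c.2 ∈ L := by
  obtain ⟨i, j⟩ := c
  obtain ⟨rfl, hj⟩ := (hμ _ _).1 hc
  rw [rowTableau_zero_apply L hL μ hμ hj]
  exact List.getElem_mem _

theorem ssytContent_rowTableau (k : ℕ) : ssytContent μ (rowTableau L hL μ hμ) k = L.count k := by
  have hcells : μ.cells.filter (fun c => rowTableau L hL μ hμ c.1 c.2 = k) =
      (univ.filter fun j : Fin L.length => L.get j = k).image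
        fun j : Fin L.length => ((0, j) : ℕ × ℕ) := by
    ext ⟨i, j⟩
    simp only [mem_filter, YoungDiagram.mem_cells, hμ, mem_image, mem_univ, true_and,
      Prod.mk.injEq]
    constructor
    · rintro ⟨⟨rfl, hj⟩, hk⟩
      exact ⟨⟨j, hj⟩, by simpa [rowTableau_zero_apply L hL μ hμ hj] using hk, rfl, rfl⟩
    · rintro ⟨j, hk, rfl, rfl⟩
      exact ⟨⟨rfl, j.2⟩, by simpa [rowTableau_zero_apply L hL μ hμ j.2] using hk⟩
  rw [ssytContent, hcells, card_image_of_injective _ fun _ _ h => Fin.ext (by simpa using h)]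
  exact Fin.card_filter_univ_eq_vector_get_eq_count k (⟨L, rfl⟩ : List.Vector ℕ L.length)

end RowTableau

def oneRow (n m : ℕ) : Fin n → ℕ := fun i => if (i : ℕ) = 0 then m else 0

theorem antitone_oneRow (n m : ℕ) : Antitone (oneRow n m) := fun i j hij => by
  have : (i : ℕ) ≤ j := hij
  simp only [oneRow]
  split_ifs <;> omega

theorem sum_oneRow {n : ℕ} (hn : 1 ≤ n) (m : ℕ) : ∑ i, oneRow n m i = m := by
  obtain ⟨k, rfl⟩ := Nat.exists_eq_add_of_le' hn
  simp [oneRow]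

theorem mem_ofRowLens_oneRow {n : ℕ} (hn : 1 ≤ n) (m i j : ℕ) :
    (i, j) ∈ YoungDiagram.ofRowLens (List.ofFn (oneRow n m))
      (List.sortedGE_ofFn_iff.2 (antitone_oneRow n m)) ↔ i = 0 ∧ j < m := by
  simp only [YoungDiagram.mem_ofRowLens, List.length_ofFn, List.getElem_ofFn, oneRow]
  constructor
  · rintro ⟨hi, hj⟩
    split_ifs at hj with h
    · exact ⟨h, hj⟩
    · omega
  · rintro ⟨rfl, hj⟩
    exact ⟨hn, by simpa using hj⟩

theorem suDim_oneRow {n : ℕ} (hn : 1 ≤ n) (m : ℕ) :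
    suDim n (oneRow n m) = ((m + (n - 1)).choose (n - 1) : ℝ) := by
  obtain ⟨k, rfl⟩ := Nat.exists_eq_add_of_le' hn
  have hrow : ∀ i : Fin k, ∏ j ∈ Ioi i.succ,
      (((oneRow (k + 1) m i.succ : ℤ) - (oneRow (k + 1) m j : ℤ) + ((j : ℕ) : ℤ) -
        ((i.succ : ℕ) : ℤ) : ℤ) : ℝ) / (((j : ℕ) - (i.succ : ℕ) : ℕ) : ℝ) = 1 :=
    fun i => prod_eq_one fun j hj => by
      have hij : (i : ℕ) + 1 < j := Fin.lt_def.1 (mem_Ioi.1 hj)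
      have hj0 : (j : ℕ) ≠ 0 := by omega
      rw [div_eq_one_iff_eq (by exact_mod_cast (Nat.sub_pos_of_lt hij).ne')]
      simp only [oneRow, hj0, Fin.val_succ, Nat.add_one_ne_zero, if_false]
      push_cast [Nat.cast_sub hij.le]
      ring
  have hchoose : ((m + k).choose k : ℝ) = (m + 1).ascFactorial k / k.factorial := by
    rw [Nat.ascFactorial_eq_factorial_mul_choose, Nat.cast_mul]
    field_simp
  rw [suDim, prod_filter_lt_eq_prod_prod_Ioi, Fin.prod_univ_succ, Fin.prod_Ioi_zero,
    prod_congr rfl fun i _ => hrow i, prod_const_one, mul_one, Nat.add_sub_cancel, hchoose,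
    Nat.ascFactorial_eq_prod_range, ← prod_range_add_one_eq_factorial, Nat.cast_prod,
    Nat.cast_prod, ← prod_div_distrib, ← Fin.prod_univ_eq_prod_range]
  refine prod_congr rfl fun j _ => ?_
  simp [oneRow]
  ring

theorem suDim_oneRow_le {n : ℕ} (hn : 1 ≤ n) {m : ℕ} {S : ℝ} (hm : (m : ℝ) ≤ ((n : ℝ) + 1) * S) :
    suDim n (oneRow n m) ≤ ((n : ℝ) + 1) ^ (n - 1) / (n - 1).factorial * (S + 1) ^ (n - 1) := by
  rw [suDim_oneRow hn]
  calc (((m + (n - 1)).choose (n - 1) : ℕ) : ℝ)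
      ≤ ((m + (n - 1) : ℕ) : ℝ) ^ (n - 1) / (n - 1).factorial := Nat.choose_le_pow_div _ _
    _ ≤ (((n : ℝ) + 1) * (S + 1)) ^ (n - 1) / (n - 1).factorial := by
        gcongr
        push_cast [Nat.cast_sub hn]
        linarith
    _ = _ := by rw [mul_pow]; ring

theorem exists_ssyt_oneRow {n : ℕ} (hn : 1 ≤ n) (t : ℕ → ℕ) :
    ∃ T : SemistandardYoungTableau (YoungDiagram.ofRowLens
        (List.ofFn (oneRow n (∑ k ∈ range n, t k)))
        (List.sortedGE_ofFn_iff.2 (antitone_oneRow n _))),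
      (∀ c ∈ (YoungDiagram.ofRowLens (List.ofFn (oneRow n (∑ k ∈ range n, t k)))
        (List.sortedGE_ofFn_iff.2 (antitone_oneRow n _))).cells, T c.1 c.2 < n) ∧
      ∀ k < n, ssytContent _ T k = t k := by
  set s : Multiset ℕ := ∑ k ∈ range n, Multiset.replicate (t k) k
  set L := s.sort (· ≤ ·)
  have hlen : L.length = ∑ k ∈ range n, t k := by
    simp [L, s, Multiset.length_sort, Multiset.card_sum]
  have hL : L.SortedLE := (Multiset.pairwise_sort _ _).sortedLE
  have hμ : ∀ i j, (i, j) ∈ YoungDiagram.ofRowLens (List.ofFn (oneRow n (∑ k ∈ range n, t k)))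
      (List.sortedGE_ofFn_iff.2 (antitone_oneRow n _)) ↔ i = 0 ∧ j < L.length := by
    simp [mem_ofRowLens_oneRow hn, hlen]
  refine ⟨rowTableau L hL _ hμ, fun c hc => ?_, fun k hk => ?_⟩
  · have := rowTableau_mem L hL _ hμ hc
    obtain ⟨k, hk, hc⟩ := Multiset.mem_sum.1 ((Multiset.mem_sort _).1 this)
    rw [Multiset.eq_of_mem_replicate hc]
    exact mem_range.1 hk
  · rw [ssytContent_rowTableau, ← Multiset.coe_count, Multiset.sort_eq, Multiset.count_sum']
    simp [Multiset.count_replicate, hk]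

theorem exists_content_sub_eq {n : ℕ} (hn : 1 ≤ n) (p : Fin (n - 1) → ℤ) :
    ∃ t : ℕ → ℕ, ((∑ k ∈ range n, t k : ℕ) : ℤ) ≤ ((n : ℤ) + 1) * ∑ i, |p i| ∧
      ∀ i : Fin (n - 1), (t i : ℤ) - t (n - 1) = p i := by
  set N := ∑ i, |p i|
  have hpN : ∀ i, |p i| ≤ N := fun i => single_le_sum (fun i _ => abs_nonneg (p i)) (mem_univ i)
  set t : ℕ → ℕ := fun k => if h : k < n - 1 then (p ⟨k, h⟩ + N).toNat else N.toNat
  have ht : ∀ i : Fin (n - 1), (t i : ℤ) = p i + N := fun i => by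
    simp only [t, dif_pos i.2, Fin.eta]
    have := (abs_le.1 (hpN i)).1
    omega
  have htlast : (t (n - 1) : ℤ) = N := by
    simp only [t, lt_irrefl, dif_neg, not_false_eq_true]
    exact Int.toNat_of_nonneg (sum_nonneg fun i _ => abs_nonneg (p i))
  refine ⟨t, ?_, fun i => by rw [ht, htlast]; ring⟩
  have hsum : ∑ i, p i ≤ N := sum_le_sum fun i _ => le_abs_self (p i)
  have hsplit : ∑ k ∈ range n, t k = ∑ i : Fin (n - 1), t i + t (n - 1) := by
    rw [Fin.sum_univ_eq_sum_range, ← sum_range_succ, Nat.sub_add_cancel hn]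
  rw [hsplit, Nat.cast_add, Nat.cast_sum, sum_congr rfl fun i _ => ht i, htlast, sum_add_distrib,
    sum_const, card_fin, nsmul_eq_mul, Nat.cast_sub hn, Nat.cast_one]
  linarith

/-- The restriction of the dimension weight `ω₁(π) = d_π` on `SU(n)` to the
maximal torus `ℤ^{n-1}` is equivalent to the polynomial weight
`(1 + ‖p‖₁)^{n-1}`: for every nonincreasing `p ∈ ℤ^{n-1}`,
`c_n(∑|pᵢ|+1)^{n-1} ≤ inf{ d_λ : λ dominant with a semistandard tableau of
shape λ, entries in n letters, and content realizing `p` } ≤ d_n(∑|pᵢ|+1)^{n-1}`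
with `c_n = 1/(n^{2(n-1)} 2^{n-2} ∏_{i<j}(j-i))` and `d_n = (n+1)^{n-1}/(n-1)!`. -/
theorem stmt_17 (n : ℕ) (hn : 2 ≤ n) (p : Fin (n - 1) → ℤ)
    (D : Set ℝ)
    (hD : D = { x : ℝ | ∃ lam : Fin n → ℕ,
      (∀ i j : Fin n, i ≤ j → lam j ≤ lam i) ∧ lam ⟨n - 1, by omega⟩ = 0 ∧
      (∃ (hs : (List.ofFn lam).SortedGE)
         (T : SemistandardYoungTableau (YoungDiagram.ofRowLens (List.ofFn lam) hs)),
        (∀ c ∈ (YoungDiagram.ofRowLens (List.ofFn lam) hs).cells, T c.1 c.2 < n) ∧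
        (∑ k ∈ Finset.range n,
            ssytContent (YoungDiagram.ofRowLens (List.ofFn lam) hs) T k) =
          ∑ i, lam i ∧
        (∀ i : Fin (n - 1),
          (ssytContent (YoungDiagram.ofRowLens (List.ofFn lam) hs) T (i : ℕ) : ℤ) -
            (ssytContent (YoungDiagram.ofRowLens (List.ofFn lam) hs) T (n - 1) : ℤ) =
            p i)) ∧
      x = suDim n lam }) :
    (1 / ((n : ℝ) ^ (2 * (n - 1)) * 2 ^ (n - 2) *
        ∏ q ∈ univ.filter (fun q : Fin n × Fin n => q.1 < q.2),
          (((q.2 : ℕ) - (q.1 : ℕ) : ℕ) : ℝ))) *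
        ((∑ i, |(p i : ℝ)|) + 1) ^ (n - 1) ≤ sInf D ∧
    sInf D ≤ ((n : ℝ) + 1) ^ (n - 1) / (Nat.factorial (n - 1)) *
        ((∑ i, |(p i : ℝ)|) + 1) ^ (n - 1) := by
  obtain ⟨t, htsum, htp⟩ := exists_content_sub_eq (by omega) p
  have hm : ((∑ k ∈ range n, t k : ℕ) : ℝ) ≤ ((n : ℝ) + 1) * ∑ i, |(p i : ℝ)| := by
    exact_mod_cast htsum
  set S := ∑ i, |(p i : ℝ)|
  have hlow : ∀ x ∈ D, 1 / ((n : ℝ) ^ (2 * (n - 1)) * 2 ^ (n - 2) *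
      ∏ q ∈ univ.filter (fun q : Fin n × Fin n => q.1 < q.2),
        (((q.2 : ℕ) - (q.1 : ℕ) : ℕ) : ℝ)) * (S + 1) ^ (n - 1) ≤ x := by
    rw [hD]
    rintro x ⟨lam, hlam, hlast, ⟨hs, T, -, hsum, hp⟩, rfl⟩
    have hS := sum_abs_le_of_sub_eq _ p hp
    rw [← Nat.cast_sum, hsum, Nat.cast_sum] at hS
    exact mul_pow_le_suDim hn hlam hlast (sum_nonneg fun i _ => abs_nonneg _) hS
  obtain ⟨T, hTlt, hT⟩ := exists_ssyt_oneRow (n := n) (by omega) t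
  have hmem : suDim n (oneRow n (∑ k ∈ range n, t k)) ∈ D := by
    rw [hD]
    refine ⟨_, antitone_oneRow n _, if_neg (show n - 1 ≠ 0 by omega),
      ⟨_, T, hTlt, ?_, fun i => ?_⟩, rfl⟩
    · rw [sum_congr rfl fun k hk => hT k (mem_range.1 hk), sum_oneRow (by omega)]
    · rw [hT i (Nat.lt_of_lt_pred i.2), hT (n - 1) (by omega), htp i]
  exact ⟨le_csInf ⟨_, hmem⟩ hlow,
    (csInf_le ⟨_, hlow⟩ hmem).trans (suDim_oneRow_le (by omega) hm)⟩
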